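/- arXiv:2203.10138 — 2 statements merged into one kernel-verified Lean document; each statement's English description precedes it below -/
import Mathlib

section
/- Let $V$ be a finite-dimensional real inner product space with orthonormal basis $(e_i)$ and let $a_{ijk}$ be totally antisymmetric real numbers. Define skew-symmetric endomorphisms $\bar T_i\in\mathfrak{so}(V)$ by $\bar T_i e_j = \sum_k a_{ijk}e_k$. Then the endomorphism $q(S) := \sum_{i<j}(e_i\wedge e_j)\circ S(e_i,e_j)$ of $V$, where $S(e_i,e_j) = [\bar T_i,\bar T_j] - \bar T_{\bar T_{e_i}e_j}$ and $e_i\wedge e_j$ denotes the skew endomorphism $Z\mapsto \langle e_i,Z\rangle e_j - \langle e_j,Z\rangle e_i$, vanishes identically on $V$. -/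
open scoped RealInnerProductSpace

/-- With skew endomorphisms `T̄ᵢ eⱼ = ∑ₖ aᵢⱼₖ eₖ` built from a totally antisymmetric array
`aᵢⱼₖ` in an orthonormal basis, the operator
`q(S) = ∑_{i<j} (eᵢ ∧ eⱼ) ∘ ([T̄ᵢ, T̄ⱼ] - ∑ₖ aᵢⱼₖ T̄ₖ)` vanishes identically on `V`. -/
theorem stmt4 (V : Type*) [NormedAddCommGroup V] [InnerProductSpace ℝ V]
    [FiniteDimensional ℝ V]
    (ι : Type*) [Fintype ι] [LinearOrder ι] (e : OrthonormalBasis ι ℝ V)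
    (aa : ι → ι → ι → ℝ)
    (ha1 : ∀ i j k, aa i j k = - aa j i k)
    (ha2 : ∀ i j k, aa i j k = - aa i k j)
    (T : ι → Module.End ℝ V)
    (hT : ∀ i j, T i (e j) = ∑ k, aa i j k • e k)
    (w : ι → ι → Module.End ℝ V)
    (hw : ∀ i j (Z : V), w i j Z = ⟪e i, Z⟫ • e j - ⟪e j, Z⟫ • e i) :
    ∑ i, ∑ j ∈ Finset.univ.filter (fun j => i < j),
      (w i j) * ((T i) * (T j) - (T j) * (T i) - ∑ k, aa i j k • T k)
      = (0 : Module.End ℝ V) := by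
  have hinner : ∀ i j, ⟪e i, e j⟫ = if i = j then (1:ℝ) else 0 := fun i j => by
    rw [orthonormal_iff_ite.mp e.orthonormal]
  have hzero2 : ∀ x y, aa x x y = 0 := fun x y => by
    have := ha1 x x y; linarith
  have hzero3 : ∀ x y, aa x y y = 0 := fun x y => by
    have := ha2 x y y; linarith
  set c : ι → ι → ι → ι → ℝ := fun i j l m =>
    ∑ k, (aa j m k * aa i k l - aa i m k * aa j k l - aa i j k * aa k m l) with hc
  have hS : ∀ i j l m, ⟪e l, ((T i) * (T j) - (T j) * (T i) - ∑ k, aa i j k • T k) (e m)⟫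
      = c i j l m := by
    intro i j l m
    simp only [LinearMap.sub_apply, Module.End.mul_apply, LinearMap.sum_apply,
      LinearMap.smul_apply, hT, map_sum, map_smul, Finset.smul_sum, smul_smul,
      inner_sub_right, inner_sum, inner_smul_right, hinner, mul_ite, mul_one, mul_zero,
      Finset.sum_ite_eq, Finset.mem_univ, if_true, hc]
    rw [Finset.sum_sub_distrib, Finset.sum_sub_distrib]
  have hcswap : ∀ i j l m, c j i l m = - c i j l m := by
    intro i j l m
    simp only [hc, ← Finset.sum_neg_distrib]
    refine Finset.sum_congr rfl fun k _ => ?_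
    rw [ha1 j i k]; ring
  have hcnn : ∀ n m, c n n n m = 0 := fun n m => by
    simp [hc, hzero2]
  have htrace : ∀ n m, ∑ i, c i n i m = 0 := by
    intro n m
    have key : ∀ i k : ι, (aa n m k * aa i k i - aa i m k * aa n k i - aa i n k * aa k m i)
        + (aa n m i * aa k i k - aa k m i * aa n i k - aa k n i * aa i m k) = 0 := by
      intro i k
      have h1 : aa i k i = 0 := by rw [ha2 i k i]; simp [hzero2]
      have h2 : aa k i k = 0 := by rw [ha2 k i k]; simp [hzero2]
      have h3 : aa n i k = - aa n k i := ha2 n i k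
      have h4 : aa k n i = - aa n k i := ha1 k n i
      have h5 : aa i n k = aa n k i := by rw [ha1 i n k, ha2 n i k]; ring
      rw [h1, h2, h3, h4, h5]; ring
    have hsum : (∑ i, ∑ k, (aa n m k * aa i k i - aa i m k * aa n k i - aa i n k * aa k m i))
        + (∑ i, ∑ k, (aa n m i * aa k i k - aa k m i * aa n i k - aa k n i * aa i m k)) = 0 := by
      rw [← Finset.sum_add_distrib]
      refine Finset.sum_eq_zero fun i _ => ?_
      rw [← Finset.sum_add_distrib]
      exact Finset.sum_eq_zero fun k _ => key i k
    rw [Finset.sum_comm (f := fun i k => aa n m i * aa k i k - aa k m i * aa n i k - aa k n i * aa i m k)]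
      at hsum
    simp only [hc]
    linarith
  -- main reduction
  refine Module.Basis.ext e.toBasis fun m => ?_
  simp only [OrthonormalBasis.coe_toBasis, LinearMap.zero_apply]
  -- show the vector is zero via inner products with basis
  have hv : ∀ (v : V), (∀ n, ⟪e n, v⟫ = 0) → v = 0 := by
    intro v h
    apply e.repr.injective
    simp only [map_zero]
    ext n
    simp [e.repr_apply_apply, h]
  refine hv _ fun n => ?_
  simp only [LinearMap.sum_apply, inner_sum, Module.End.mul_apply]
  have step : ∀ i j, ⟪e n, w i j (((T i) * (T j) - (T j) * (T i) - ∑ k, aa i j k • T k) (e m))⟫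
      = c i j i m * (if n = j then 1 else 0) - c i j j m * (if n = i then 1 else 0) := by
    intro i j
    rw [hw]
    simp only [inner_sub_right, inner_smul_right, hS, hinner]
  simp only [step]
  have A : ∀ i, (∑ j ∈ Finset.univ.filter (fun j => i < j), (c i j i m * if n = j then 1 else 0))
      = if i < n then c i n i m else 0 := by
    intro i
    simp only [mul_ite, mul_one, mul_zero]
    rw [Finset.sum_ite_eq]
    simp
  have B : ∀ i, (∑ j ∈ Finset.univ.filter (fun j => i < j), (c i j j m * if n = i then 1 else 0))
      = if n = i then (∑ j ∈ Finset.univ.filter (fun j => i < j), c i j j m) else 0 := by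
    intro i
    split_ifs with h <;> simp [h]
  simp only [Finset.sum_sub_distrib]
  rw [Finset.sum_congr rfl (fun i _ => A i), Finset.sum_congr rfl (fun i _ => B i),
    Finset.sum_ite_eq]
  simp only [Finset.mem_univ, if_true]
  have hB : (∑ j ∈ Finset.univ.filter (fun j => n < j), c n j j m)
      = - ∑ j, if n < j then c j n j m else 0 := by
    rw [Finset.sum_filter, ← Finset.sum_neg_distrib]
    refine Finset.sum_congr rfl fun j _ => ?_
    split_ifs with h
    · rw [hcswap j n j m]
    · simp
  rw [hB, sub_neg_eq_add, ← Finset.sum_add_distrib]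
  have key : ∀ i, ((if i < n then c i n i m else 0) + (if n < i then c i n i m else 0))
      = c i n i m - (if i = n then c i n i m else 0) := by
    intro i
    rcases lt_trichotomy i n with h | rfl | h
    · simp [h, asymm h, h.ne]
    · simp
    · simp [h, asymm h, h.ne']
  rw [Finset.sum_congr rfl (fun i _ => key i), Finset.sum_sub_distrib, htrace,
    Finset.sum_ite_eq' Finset.univ n]
  simp [hcnn]
end

section
/- Let $\mathfrak{g}$ be a Lie algebra with reductive orthogonal decomposition $\mathfrak{g}=\mathfrak{h}\oplus\mathfrak{m}$ with respect to an $\operatorname{ad}$-invariant inner product $Q$. For $X\in\mathfrak{m}$ define $\mathcal{A}_X = \operatorname{pr}_\mathfrak{m}\circ\operatorname{ad}(X)|_\mathfrak{m}$ and $r_X=\operatorname{ad}(X)|_\mathfrak{h}\colon\mathfrak{h}\to\mathfrak{m}$, $r'_X = \operatorname{pr}_\mathfrak{h}\circ\operatorname{ad}(X)|_\mathfrak{m}\colon\mathfrak{m}\to\mathfrak{h}$. Then for an orthonormal basis $(e_i)$ of $\mathfrak{m}$: $-\sum_i \mathcal{A}_{e_i}^2 = \operatorname{pr}_\mathfrak{m}\operatorname{Cas}^\mathfrak{g}|_\mathfrak{m}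 - \operatorname{Cas}^\mathfrak{h}_\mathfrak{m} - \operatorname{Cas}^\mathfrak{h}_\mathfrak{m}$, where $\operatorname{Cas}^\mathfrak{g}=-\sum_i\operatorname{ad}(e_i)^2 - \sum_j\operatorname{ad}(f_j)^2$ for an orthonormal basis $(f_j)$ of $\mathfrak{h}$, and $\operatorname{Cas}^\mathfrak{h}_\mathfrak{m} = -\sum_j\operatorname{ad}(f_j)^2|_\mathfrak{m}$. Equivalently, $\sum_i r_{e_i}\circ r'_{e_i} = -\operatorname{Cas}^\mathfrak{h}_\mathfrak{m}$ as an endomorphism of $\mathfrak{m}$. -/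
/-- Lemma 3.3 for `p = 1`: on a reductive orthogonal decomposition `g = h ⊕ m` with
ad-invariant inner product `Q`, with `𝒜_X = pr_m ∘ ad(X)|_m`, `r_X = ad(X)|_h`,
`r'_X = pr_h ∘ ad(X)|_m`, one has on `m`
`-∑ᵢ 𝒜_{eᵢ}² = pr_m ∘ Cas^g|_m - Cas^h_m - Cas^h_m`, and equivalently
`∑ᵢ r_{eᵢ} ∘ r'_{eᵢ} = -Cas^h_m`. -/
theorem stmt14 (g : Type*) [LieRing g] [LieAlgebra ℝ g]
    (Q : LinearMap.BilinForm ℝ g)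
    (hsymm : ∀ X Y : g, Q X Y = Q Y X)
    (hpos : ∀ X : g, X ≠ 0 → 0 < Q X X)
    (hinv : ∀ X Y Z : g, Q ⁅X, Y⁆ Z + Q Y ⁅X, Z⁆ = 0)
    (h : LieSubalgebra ℝ g)
    (m : Submodule ℝ g) (hm : m = Q.orthogonal h.toSubmodule)
    (hred : ∀ H ∈ h, ∀ X ∈ m, ⁅H, X⁆ ∈ m)
    (Pm : g →ₗ[ℝ] g) (hPmmem : ∀ X : g, Pm X ∈ m)
    (hPmorth : ∀ X : g, ∀ Y ∈ m, Q (X - Pm X) Y = 0)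
    (Ph : g →ₗ[ℝ] g) (hPhmem : ∀ X : g, Ph X ∈ h)
    (hPhorth : ∀ X : g, ∀ Y ∈ h, Q (X - Ph X) Y = 0)
    (κ ι : Type*) [Fintype κ] [Fintype ι] [DecidableEq κ] [DecidableEq ι]
    (f : κ → g) (hf : ∀ j, f j ∈ h)
    (hfspan : Submodule.span ℝ (Set.range f) = h.toSubmodule)
    (hforth : ∀ j j', Q (f j) (f j') = if j = j' then 1 else 0)
    (e : ι → g) (he : ∀ i, e i ∈ m)
    (hespan : Submodule.span ℝ (Set.range e) = m)
    (heorth : ∀ i i', Q (e i) (e i') = if i = i' then 1 else 0) :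
    (∀ x ∈ m,
      -∑ i, Pm ⁅e i, Pm ⁅e i, x⁆⁆
        = Pm ((-∑ i, ⁅e i, ⁅e i, x⁆⁆) + (-∑ j, ⁅f j, ⁅f j, x⁆⁆))
          - (-∑ j, ⁅f j, ⁅f j, x⁆⁆) - (-∑ j, ⁅f j, ⁅f j, x⁆⁆)) ∧
    (∀ x ∈ m, ∑ i, ⁅e i, Ph ⁅e i, x⁆⁆ = -(-∑ j, ⁅f j, ⁅f j, x⁆⁆)) := by
  -- positivity consequence
  have hQz : ∀ d : g, Q d d = 0 → d = 0 := by
    intro d hd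
    by_contra hne
    exact (hpos d hne).ne' hd
  -- membership in m
  have hmemm : ∀ d : g, d ∈ m ↔ ∀ Y ∈ h, Q Y d = 0 := by
    intro d
    rw [hm]
    exact Iff.rfl
  -- Pm is the identity on m
  have hPmM : ∀ x ∈ m, Pm x = x := by
    intro x hx
    have hd : x - Pm x ∈ m := Submodule.sub_mem m hx (hPmmem x)
    exact (sub_eq_zero.mp (hQz _ (hPmorth x _ hd))).symm
  -- decomposition v = Pm v + Ph v
  have hdecomp : ∀ v : g, v = Pm v + Ph v := by
    intro v
    have hdm : v - Pm v - Ph v ∈ m := by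
      rw [hmemm]
      intro Y hY
      have h1 : Q (v - Ph v) Y = 0 := hPhorth v Y hY
      have h2 : Q Y (Pm v) = 0 := (hmemm (Pm v)).mp (hPmmem v) Y hY
      have h3 : Q Y (v - Pm v - Ph v)
          = Q (v - Ph v) Y - Q Y (Pm v) := by
        rw [hsymm Y (v - Pm v - Ph v), hsymm Y (Pm v), LinearMap.BilinForm.sub_left,
          LinearMap.BilinForm.sub_left, LinearMap.BilinForm.sub_left]
        ring
      rw [h3, h1, h2, sub_zero]
    have hQd : Q (v - Pm v - Ph v) (v - Pm v - Ph v) = 0 := by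
      have h1 : Q (v - Pm v) (v - Pm v - Ph v) = 0 := hPmorth v _ hdm
      have h2 : Q (Ph v) (v - Pm v - Ph v) = 0 := (hmemm _).mp hdm _ (hPhmem v)
      have h3 : Q (v - Pm v - Ph v) (v - Pm v - Ph v)
          = Q (v - Pm v) (v - Pm v - Ph v) - Q (Ph v) (v - Pm v - Ph v) :=
        LinearMap.BilinForm.sub_left _ _ _
      rw [h3, h1, h2, sub_zero]
    have := hQz _ hQd
    have h4 : v - (Pm v + Ph v) = 0 := by rw [← sub_sub]; exact this
    exact (sub_eq_zero.mp h4)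
  -- formula for Ph
  have hPhF : ∀ v : g, Ph v = ∑ j, Q v (f j) • f j := by
    intro v
    set w : g := ∑ j, Q v (f j) • f j with hw
    have hwh : w ∈ h.toSubmodule :=
      Submodule.sum_mem _ fun j _ => Submodule.smul_mem _ _ (hf j)
    have hker : ∀ Y ∈ h.toSubmodule, Q (v - w) Y = 0 := by
      have hle : Submodule.span ℝ (Set.range f) ≤ LinearMap.ker (Q (v - w)) := by
        rw [Submodule.span_le]
        rintro _ ⟨j, rfl⟩
        simp only [SetLike.mem_coe, LinearMap.mem_ker, hw, map_sub, map_sum, map_smul,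
          LinearMap.sub_apply, LinearMap.sum_apply, LinearMap.smul_apply, smul_eq_mul,
          hforth, mul_ite, mul_one, mul_zero, Finset.sum_ite_eq', Finset.mem_univ,
          if_true, sub_self]
      intro Y hY
      rw [← hfspan] at hY
      exact hle hY
    have hdh : Ph v - w ∈ h.toSubmodule := Submodule.sub_mem _ (hPhmem v) hwh
    have h1 : Q (v - Ph v) (Ph v - w) = 0 := hPhorth v _ hdh
    have h2 : Q (v - w) (Ph v - w) = 0 := hker _ hdh
    have h3 : Q (Ph v - w) (Ph v - w) = 0 := by
      have heq : Ph v - w = (v - w) - (v - Ph v) := by abel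
      calc Q (Ph v - w) (Ph v - w)
          = Q (v - w) (Ph v - w) - Q (v - Ph v) (Ph v - w) := by
            rw [heq]; exact LinearMap.BilinForm.sub_left _ _ _
        _ = 0 := by rw [h1, h2, sub_zero]
    exact sub_eq_zero.mp (hQz _ h3)
  -- formula for elements of m
  have hmF : ∀ y ∈ m, y = ∑ i, Q y (e i) • e i := by
    intro y hy
    set w : g := ∑ i, Q y (e i) • e i with hw
    have hwm : w ∈ m :=
      Submodule.sum_mem _ fun i _ => Submodule.smul_mem _ _ (he i)
    have hker : ∀ Y ∈ m, Q (y - w) Y = 0 := by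
      have hle : Submodule.span ℝ (Set.range e) ≤ LinearMap.ker (Q (y - w)) := by
        rw [Submodule.span_le]
        rintro _ ⟨i, rfl⟩
        simp only [SetLike.mem_coe, LinearMap.mem_ker, hw, map_sub, map_sum, map_smul,
          LinearMap.sub_apply, LinearMap.sum_apply, LinearMap.smul_apply, smul_eq_mul,
          heorth, mul_ite, mul_one, mul_zero, Finset.sum_ite_eq', Finset.mem_univ,
          if_true, sub_self]
      intro Y hY
      rw [← hespan] at hY
      exact hle hY
    have hdm : y - w ∈ m := Submodule.sub_mem _ hy hwm
    exact sub_eq_zero.mp (hQz _ (hker _ hdm))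
  -- bracket with a finite sum
  have lie_sumκ : ∀ (a : g) (φ : κ → g), ⁅a, ∑ j, φ j⁆ = ∑ j, ⁅a, φ j⁆ := by
    intro a φ
    rw [show (⁅a, ∑ j, φ j⁆ : g) = LieAlgebra.ad ℝ g a (∑ j, φ j) from rfl, map_sum]
    rfl
  have lie_sumι : ∀ (a : g) (φ : ι → g), ⁅a, ∑ i, φ i⁆ = ∑ i, ⁅a, φ i⁆ := by
    intro a φ
    rw [show (⁅a, ∑ j, φ j⁆ : g) = LieAlgebra.ad ℝ g a (∑ j, φ j) from rfl, map_sum]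
    rfl
  -- the key claim (second part)
  have claim2 : ∀ x ∈ m, ∑ i, ⁅e i, Ph ⁅e i, x⁆⁆ = ∑ j, ⁅f j, ⁅f j, x⁆⁆ := by
    intro x hx
    calc ∑ i, ⁅e i, Ph ⁅e i, x⁆⁆
        = ∑ i, ∑ j, Q ⁅e i, x⁆ (f j) • ⁅e i, f j⁆ := by
          refine Finset.sum_congr rfl fun i _ => ?_
          rw [hPhF ⁅e i, x⁆, lie_sumκ]
          exact Finset.sum_congr rfl fun j _ => by rw [lie_smul]
      _ = ∑ j, ∑ i, Q ⁅f j, x⁆ (e i) • ⁅f j, e i⁆ := by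
          rw [Finset.sum_comm]
          refine Finset.sum_congr rfl fun j _ => Finset.sum_congr rfl fun i _ => ?_
          have c1 : Q ⁅e i, x⁆ (f j) = -Q x ⁅e i, f j⁆ := by
            have := hinv (e i) x (f j); linarith
          have hskew : ⁅f j, e i⁆ = -⁅e i, f j⁆ := (lie_skew (f j) (e i)).symm
          have c2 : Q ⁅f j, x⁆ (e i) = Q x ⁅e i, f j⁆ := by
            have h5 := hinv (f j) x (e i)
            rw [hskew, map_neg] at h5
            linarith
          rw [c1, c2, hskew, smul_neg, neg_smul]
      _ = ∑ j, ⁅f j, ⁅f j, x⁆⁆ := by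
          refine Finset.sum_congr rfl fun j _ => ?_
          conv_rhs => rw [hmF ⁅f j, x⁆ (hred _ (hf j) _ hx)]
          rw [lie_sumι]
          exact Finset.sum_congr rfl fun i _ => by rw [lie_smul]
  refine ⟨?_, fun x hx => by rw [neg_neg]; exact claim2 x hx⟩
  intro x hx
  have hPmlie : ∀ i, ⁅e i, Ph ⁅e i, x⁆⁆ ∈ m := by
    intro i
    have h1 : ⁅Ph ⁅e i, x⁆, e i⁆ ∈ m := hred _ (hPhmem ⁅e i, x⁆) _ (he i)
    have h2 : -⁅Ph ⁅e i, x⁆, e i⁆ ∈ m := Submodule.neg_mem _ h1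
    rwa [lie_skew] at h2
  have hPmB : Pm (-∑ j, ⁅f j, ⁅f j, x⁆⁆) = -∑ j, ⁅f j, ⁅f j, x⁆⁆ := by
    rw [map_neg, map_sum]
    congr 1
    exact Finset.sum_congr rfl fun j _ => hPmM _ (hred _ (hf j) _ (hred _ (hf j) _ hx))
  have expand : ∀ i, Pm ⁅e i, Pm ⁅e i, x⁆⁆
      = Pm ⁅e i, ⁅e i, x⁆⁆ - ⁅e i, Ph ⁅e i, x⁆⁆ := by
    intro i
    have h1 : Pm ⁅e i, x⁆ = ⁅e i, x⁆ - Ph ⁅e i, x⁆ :=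
      eq_sub_of_add_eq (hdecomp ⁅e i, x⁆).symm
    rw [h1, lie_sub, map_sub, hPmM _ (hPmlie i)]
  rw [map_add, hPmB, map_neg, map_sum]
  simp_rw [expand]
  rw [Finset.sum_sub_distrib, claim2 x hx]
  abel
end
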